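/- (q-contagious normalization / new q-binomial theorem) For all n ≥ 0 and parameters m, u, s: ∑_{κ=0}^{n} [n choose κ]_{q^{-s}} q^{(m+sκ)(n-κ)} ∏_{α=0}^{κ-1}[m+αs]_q ∏_{β=0}^{n-κ-1}[u+βs]_q = ∏_{γ=0}^{n-1}[m+u+γs]_q. -/

import Mathlib

open Real

/-- The `q`-analog `[x]_q = (q^x - 1)/(q - 1)` of a real number `x` (`q > 0`). -/
noncomputable def qNumR (q x : ℝ) : ℝ := (q ^ x - 1) / (q - 1)

/-- The Gaussian (`q`-)binomial coefficient in an arbitrary base, via the Pascal recursion. -/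
def qBinom {R : Type*} [CommRing R] (q : R) : ℕ → ℕ → R
  | _, 0 => 1
  | 0, _ + 1 => 0
  | n + 1, k + 1 => qBinom q n k + q ^ (k + 1) * qBinom q n (k + 1)

/-!
Induction on `n`. Put `Q = q^{-s}`, `w k = q^{m+sk}` (so the weight is `w k ^ (n - k)` and
`w (k + 1) * Q = w k`), `a i = [m+is]_q`, `b j = [u+js]_q`. Expanding the `(n+1)`-st sum with the
second `Q`-Pascal rule `[n+1, k+1] = Q^{n-k} [n, k] + [n, k+1]`, the `n`-th summand at `k`
reappears multiplied by `a k + w k * b (n - k) = [m+u+ns]_q`, which does not depend on `k`.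
Only these two relations between `Q, w, a, b` enter, so the identity is proved for arbitrary
sequences in a commutative ring.
-/

open Finset

section qBinom

variable {R : Type*} [CommRing R] (q : R)

@[simp]
theorem qBinom_zero_right (n : ℕ) : qBinom q n 0 = 1 := by
  cases n <;> rfl

theorem qBinom_succ_succ (n k : ℕ) :
    qBinom q (n + 1) (k + 1) = qBinom q n k + q ^ (k + 1) * qBinom q n (k + 1) :=
  rfl

theorem qBinom_eq_zero_of_lt : ∀ {n k : ℕ}, n < k → qBinom q n k = 0
  | 0, _ + 1, _ => rfl
  | n + 1, k + 1, h => by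
    rw [qBinom_succ_succ, qBinom_eq_zero_of_lt (by omega), qBinom_eq_zero_of_lt (by omega),
      mul_zero, add_zero]

/-- The second `q`-Pascal rule, with the power of `q` on the other summand. -/
theorem qBinom_add_succ_succ (n k : ℕ) :
    qBinom q (n + k + 1) (k + 1) = q ^ n * qBinom q (n + k) k + qBinom q (n + k) (k + 1) := by
  match n, k with
  | 0, k =>
    rw [zero_add, qBinom_succ_succ, qBinom_eq_zero_of_lt q (Nat.lt_succ_self k)]
    ring
  | n + 1, 0 =>
    have ih := qBinom_add_succ_succ n 0
    have e₁ := qBinom_succ_succ q (n + 1) 0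
    have e₂ := qBinom_succ_succ q n 0
    simp only [add_zero, zero_add, pow_one, qBinom_zero_right] at ih e₁ e₂ ⊢
    linear_combination e₁ + q * ih - e₂
  | n + 1, k + 1 =>
    have ih₁ := qBinom_add_succ_succ (n + 1) k
    have ih₂ := qBinom_add_succ_succ n (k + 1)
    rw [show n + 1 + k = n + k + 1 by omega] at ih₁
    rw [show n + (k + 1) = n + k + 1 by omega] at ih₂
    rw [show n + 1 + (k + 1) = n + k + 1 + 1 by omega]
    have e₁ := qBinom_succ_succ q (n + k + 1 + 1) (k + 1)
    have e₂ := qBinom_succ_succ q (n + k + 1) k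
    have e₃ := qBinom_succ_succ q (n + k + 1) (k + 1)
    linear_combination e₁ + ih₁ + q ^ (k + 2) * ih₂ - q ^ (n + 1) * e₂ - e₃
termination_by n + k

end qBinom

section Summand

variable {R : Type*} [CommRing R] (Q : R) (w a b : ℕ → R)

def qBinomSummand (n k : ℕ) : R :=
  qBinom Q n k * w k ^ (n - k) * (∏ i ∈ range k, a i) * ∏ j ∈ range (n - k), b j

theorem qBinomSummand_of_lt {n k : ℕ} (h : n < k) : qBinomSummand Q w a b n k = 0 := by
  rw [qBinomSummand, qBinom_eq_zero_of_lt Q h, zero_mul, zero_mul, zero_mul]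

theorem qBinomSummand_succ_zero (n : ℕ) :
    qBinomSummand Q w a b (n + 1) 0 = qBinomSummand Q w a b n 0 * (w 0 * b n) := by
  simp only [qBinomSummand, qBinom_zero_right, Nat.sub_zero, pow_succ, prod_range_succ,
    prod_range_zero]
  ring

theorem qBinomSummand_succ_succ (hw : ∀ i, w (i + 1) * Q = w i) {n j : ℕ} (hj : j ≤ n) :
    qBinomSummand Q w a b (n + 1) (j + 1) =
      qBinomSummand Q w a b n j * a j +
        qBinomSummand Q w a b n (j + 1) * (w (j + 1) * b (n - (j + 1))) := by
  obtain ⟨d, rfl⟩ := Nat.exists_eq_add_of_le' hj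
  have hpow : w (j + 1) ^ d * Q ^ d = w j ^ d := by rw [← mul_pow, hw]
  unfold qBinomSummand
  rw [qBinom_add_succ_succ]
  rcases d with _ | d
  · simp [qBinom_eq_zero_of_lt, prod_range_succ, mul_assoc]
  · simp only [show d + 1 + j + 1 - (j + 1) = d + 1 by omega,
      show d + 1 + j - j = d + 1 by omega, show d + 1 + j - (j + 1) = d by omega, prod_range_succ]
    linear_combination
      qBinom Q (d + 1 + j) j * (∏ i ∈ range j, a i) * a j * (∏ i ∈ range d, b i) * b d *
        hpow

theorem sum_qBinomSummand_succ (hw : ∀ i, w (i + 1) * Q = w i) (n : ℕ) :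
    ∑ k ∈ range (n + 2), qBinomSummand Q w a b (n + 1) k =
      ∑ k ∈ range (n + 1), qBinomSummand Q w a b n k * (a k + w k * b (n - k)) := by
  set g : ℕ → R := fun k => qBinomSummand Q w a b n k * (w k * b (n - k))
  have hg_top : g (n + 1) = 0 := by
    simp only [g, qBinomSummand_of_lt Q w a b (Nat.lt_succ_self n), zero_mul]
  calc ∑ k ∈ range (n + 2), qBinomSummand Q w a b (n + 1) k
      = ∑ k ∈ range (n + 1), qBinomSummand Q w a b (n + 1) (k + 1) +
          qBinomSummand Q w a b (n + 1) 0 := sum_range_succ' _ _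
    _ = ∑ k ∈ range (n + 1), (qBinomSummand Q w a b n k * a k + g (k + 1)) + g 0 := by
      rw [qBinomSummand_succ_zero, sum_congr rfl fun k hk =>
        qBinomSummand_succ_succ Q w a b hw (mem_range_succ_iff.mp hk)]
      rfl
    _ = ∑ k ∈ range (n + 1), qBinomSummand Q w a b n k * a k +
          ∑ k ∈ range (n + 1), g k := by
      rw [sum_add_distrib, add_assoc, ← sum_range_succ' g, sum_range_succ g, hg_top, add_zero]
    _ = _ := by
      simp only [g, ← sum_add_distrib, mul_add]

theorem sum_qBinomSummand_eq_prod (c : ℕ → R) (hw : ∀ i, w (i + 1) * Q = w i)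
    (hc : ∀ i j, a i + w i * b j = c (i + j)) (n : ℕ) :
    ∑ k ∈ range (n + 1), qBinomSummand Q w a b n k = ∏ i ∈ range n, c i := by
  induction n with
  | zero => simp [qBinomSummand]
  | succ n ih =>
    rw [sum_qBinomSummand_succ Q w a b hw, prod_range_succ, ← ih, sum_mul]
    refine sum_congr rfl fun k hk => ?_
    rw [hc, Nat.add_sub_cancel' (mem_range_succ_iff.mp hk)]

end Summand

theorem qNumR_add {q : ℝ} (hq : 0 < q) (x y : ℝ) :
    qNumR q x + q ^ x * qNumR q y = qNumR q (x + y) := by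
  rw [qNumR, qNumR, qNumR, rpow_add hq, mul_div_assoc', ← add_div]
  ring_nf

theorem qContagious_normalization_general (q m u s : ℝ) (hq0 : 0 < q) (n : ℕ) :
    ∑ κ ∈ Finset.range (n + 1),
        qBinom (q ^ (-s)) n κ * q ^ ((m + s * κ) * ((n : ℝ) - κ)) *
          (∏ α ∈ Finset.range κ, qNumR q (m + α * s)) *
          (∏ β ∈ Finset.range (n - κ), qNumR q (u + β * s)) =
      ∏ γ ∈ Finset.range n, qNumR q (m + u + γ * s) := by
  have hw : ∀ i : ℕ, q ^ (m + s * (i + 1 : ℕ)) * q ^ (-s) = q ^ (m + s * i) := fun i => by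
    rw [← rpow_add hq0]
    push_cast
    ring_nf
  have hc : ∀ i j : ℕ, qNumR q (m + i * s) + q ^ (m + s * i) * qNumR q (u + j * s) =
      qNumR q (m + u + (i + j : ℕ) * s) := fun i j => by
    rw [mul_comm s, qNumR_add hq0]
    push_cast
    ring_nf
  rw [← sum_qBinomSummand_eq_prod (q ^ (-s)) (fun i : ℕ => q ^ (m + s * i)) _ _ _ hw hc n]
  refine sum_congr rfl fun κ hκ => ?_
  rw [qBinomSummand, ← rpow_natCast, ← rpow_mul hq0.le,
    Nat.cast_sub (mem_range_succ_iff.mp hκ)]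

/-- q-contagious normalization (6.3), a new q-analog of Newton's binomial:
`∑_{κ=0}^n [n choose κ]_{q^{-s}} q^{(m+sκ)(n-κ)} ∏_{α<κ}[m+αs] ∏_{β<n-κ}[u+βs]
  = ∏_{γ<n}[m+u+γs]`. -/
theorem qContagious_normalization (q m u s : ℝ) (hq0 : 0 < q) (hq1 : q ≠ 1) (n : ℕ) :
    ∑ κ ∈ Finset.range (n + 1),
        qBinom (q ^ (-s)) n κ * q ^ ((m + s * κ) * ((n : ℝ) - κ)) *
          (∏ α ∈ Finset.range κ, qNumR q (m + α * s)) *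
          (∏ β ∈ Finset.range (n - κ), qNumR q (u + β * s)) =
      ∏ γ ∈ Finset.range n, qNumR q (m + u + γ * s) :=
  qContagious_normalization_general q m u s hq0 n
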